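/- arXiv:0707.3658 — 6 statements merged into one kernel-verified Lean document; each statement's English description precedes it below -/
import Mathlib

section
/- Let X be a countable set and w : X → ℝ≥0 a proper weight function. If φ : X → ℂ is such that for every nondecreasing function f : ℝ≥0 → ℝ with strictly positive values the family x ↦ |φ(x)| · f(w(x)) is summable, then φ has finite support. (This identifies H_{B_max,w}(X) with the space of finitely supported functions, Proposition 1.2.3(ii).) -/
open NNReal

/-!
Take `f t = 1 + ∑_{w x ≤ t} ‖φ x‖⁻¹`, a finite sum because `w` is proper. This `f` is positive
and nondecreasing, and `‖φ x‖ * f (w x) ≥ 1` on the support of `φ`; a summable family exceeds `1`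
only finitely often.
-/

theorem Summable.finite_setOf_le {X : Type*} {g : X → ℝ} (hg : Summable g) {ε : ℝ} (hε : 0 < ε) :
    {x | ε ≤ g x}.Finite := by
  simpa only [not_lt] using
    Filter.eventually_cofinite.mp (hg.tendsto_cofinite_zero.eventually_lt_const hε)

section SublevelSum

variable {X : Type*} {w : X → ℝ≥0} (hw : ∀ C : ℝ≥0, {x : X | w x ≤ C}.Finite)

noncomputable def sublevelSum (a : X → ℝ) (t : ℝ≥0) : ℝ :=
  ∑ x ∈ (hw t).toFinset, a x

variable {a : X → ℝ}

theorem sublevelSum_nonneg (ha : 0 ≤ a) (t : ℝ≥0) : 0 ≤ sublevelSum hw a t :=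
  Finset.sum_nonneg fun x _ => ha x

theorem monotone_sublevelSum (ha : 0 ≤ a) : Monotone (sublevelSum hw a) := fun _ _ hst =>
  Finset.sum_le_sum_of_subset_of_nonneg
    (fun x hx => by simpa using (Set.Finite.mem_toFinset _).mp hx |>.trans hst)
    (fun x _ _ => ha x)

theorem le_sublevelSum (ha : 0 ≤ a) (x : X) : a x ≤ sublevelSum hw a (w x) :=
  Finset.single_le_sum (fun y _ => ha y) (by simp)

end SublevelSum

theorem stmt_0_general {X : Type*} (w : X → ℝ≥0)
    (hw : ∀ C : ℝ≥0, {x : X | w x ≤ C}.Finite)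
    (φ : X → ℂ)
    (h : ∀ f : ℝ≥0 → ℝ, Monotone f → (∀ t, 0 < f t) →
      Summable fun x => ‖φ x‖ * f (w x)) :
    (Function.support φ).Finite := by
  have hinv : 0 ≤ fun x => ‖φ x‖⁻¹ := fun x => inv_nonneg.mpr (norm_nonneg _)
  set f : ℝ≥0 → ℝ := fun t => 1 + sublevelSum hw (fun x => ‖φ x‖⁻¹) t
  have hf_mono : Monotone f := monotone_const.add (monotone_sublevelSum hw hinv)
  have hf_pos : ∀ t, 0 < f t := fun t => by
    linarith [sublevelSum_nonneg hw hinv t]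
  refine ((h f hf_mono hf_pos).finite_setOf_le one_pos).subset fun x hx => ?_
  have hφx : 0 < ‖φ x‖ := norm_pos_iff.mpr hx
  calc (1 : ℝ) = ‖φ x‖ * ‖φ x‖⁻¹ := (mul_inv_cancel₀ hφx.ne').symm
    _ ≤ ‖φ x‖ * f (w x) := by
      gcongr
      linarith [le_sublevelSum hw hinv x]

/-- **Proposition 1.2.3(ii).** If `w` is a proper weight function on a countable set `X`
and `φ : X → ℂ` is such that for every nondecreasing positive `f : ℝ≥0 → ℝ` the family
`x ↦ |φ x| * f (w x)` is summable, then `φ` has finite support. -/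
theorem stmt_0 {X : Type*} [Countable X] (w : X → ℝ≥0)
    (hw : ∀ C : ℝ≥0, {x : X | w x ≤ C}.Finite)
    (φ : X → ℂ)
    (h : ∀ f : ℝ≥0 → ℝ, Monotone f → (∀ t, 0 < f t) →
      Summable fun x => ‖φ x‖ * f (w x)) :
    (Function.support φ).Finite :=
  stmt_0_general w hw φ h
end

section
/- Let G be a countable group, L : G → ℝ≥0 a length function, and let f, f₂ : ℝ≥0 → ℝ≥0 be nondecreasing functions with f(2t) ≤ f₂(t) for all t ≥ 0. Suppose λ, μ : G → ℂ satisfy: Σ|λ(g)| < ∞, Σ|μ(g)| < ∞, Σ|λ(g)| f₂(L(g)) < ∞ and Σ|μ(g)| f₂(L(g)) < ∞. Then for every g ∈ G the convolution (λ*μ)(g) := Σ_{a∈G} λ(a) μ(a⁻¹g) converges absolutely, and Σ_{g∈G} |(λ*μ)(g)| f(L(g)) ≤ (Σ|λ(g)|)·(Σ|μ(g)| f₂(L(g))) + (Σ|λ(g)| f₂(L(g)))·(Σ|μ(g)|) < ∞. In particular the weighted ℓ¹-space determined by a bounding class is closed under convolution. (Proposition 1.2.3(viii) and its proof.) -/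
/-!
Split `L g ≤ L a + L (a⁻¹ * g)` at the larger summand: since `f` is monotone,
`f (L g) ≤ f (2 max) ≤ f₂ (max) ≤ f₂ (L a) + f₂ (L (a⁻¹ * g))`. Hence the `f`-weighted double
series `∑_{g,a} |λ a| |μ (a⁻¹ g)| f (L g)` is dominated by two series which, after the change of
variables `(g, a) ↦ (a, a⁻¹ g)`, are products of the given absolutely convergent series.
-/

open NNReal

theorem Monotone.apply_le_add_of_le_add {f f₂ : ℝ≥0 → ℝ≥0} (hf : Monotone f)
    (hff₂ : ∀ t, f (2 * t) ≤ f₂ t) {s a b : ℝ≥0} (h : s ≤ a + b) : f s ≤ f₂ a + f₂ b := by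
  have h_max : s ≤ 2 * max a b := by
    rw [two_mul]
    exact h.trans (add_le_add (le_max_left a b) (le_max_right a b))
  refine (hf h_max).trans ((hff₂ _).trans ?_)
  rcases max_cases a b with ⟨hab, -⟩ | ⟨hab, -⟩ <;> rw [hab]
  · exact le_self_add
  · exact le_add_self

theorem Summable.tsum_le_tsum_prod_of_le_tsum {α β : Type*} {F : α × β → ℝ} {φ : α → ℝ}
    (hF0 : 0 ≤ F) (hF : Summable F) (hφ0 : 0 ≤ φ) (hφ : ∀ a, φ a ≤ ∑' b, F (a, b)) :
    Summable φ ∧ ∑' a, φ a ≤ ∑' p, F p := by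
  obtain ⟨hF_fib, hF_tsum⟩ := (summable_prod_of_nonneg hF0).1 hF
  have hφs : Summable φ := hF_tsum.of_nonneg_of_le hφ0 hφ
  exact ⟨hφs, (hφs.tsum_le_tsum hφ hF_tsum).trans_eq (hF.tsum_prod' hF_fib).symm⟩

section Convolution

variable {G : Type*} [Group G]

variable (G) in
def convolutionEquiv : G × G ≃ G × G where
  toFun p := (p.2, p.2⁻¹ * p.1)
  invFun p := (p.1 * p.2, p.1)
  left_inv p := by simp
  right_inv p := by simp

theorem hasSum_mul_inv_mul_of_nonneg {u v : G → ℝ} (hu : 0 ≤ u) (hv : 0 ≤ v)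
    (hus : Summable u) (hvs : Summable v) :
    HasSum (fun p : G × G => u p.2 * v (p.2⁻¹ * p.1)) ((∑' a, u a) * ∑' b, v b) :=
  (convolutionEquiv G).hasSum_iff.2 <|
    hus.hasSum.mul hvs.hasSum (hus.mul_of_nonneg hvs hu hv)

theorem Monotone.apply_length_le_add {f f₂ : ℝ≥0 → ℝ≥0} (hf : Monotone f)
    (hff₂ : ∀ t, f (2 * t) ≤ f₂ t) {L : G → ℝ≥0} (hLmul : ∀ g h : G, L (g * h) ≤ L g + L h)
    (a g : G) : f (L g) ≤ f₂ (L a) + f₂ (L (a⁻¹ * g)) :=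
  hf.apply_le_add_of_le_add hff₂ (by simpa using hLmul a (a⁻¹ * g))

end Convolution

theorem stmt_3_general {G : Type*} [Group G]
    (L : G → ℝ≥0)
    (hLmul : ∀ g h : G, L (g * h) ≤ L g + L h)
    (f f₂ : ℝ≥0 → ℝ≥0) (hf : Monotone f)
    (hff₂ : ∀ t : ℝ≥0, f (2 * t) ≤ f₂ t)
    (lam mu : G → ℂ)
    (hlam1 : Summable fun g => ‖lam g‖)
    (hmu1 : Summable fun g => ‖mu g‖)
    (hlamf : Summable fun g => ‖lam g‖ * (f₂ (L g) : ℝ))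
    (hmuf : Summable fun g => ‖mu g‖ * (f₂ (L g) : ℝ)) :
    (∀ g : G, Summable fun a : G => ‖lam a * mu (a⁻¹ * g)‖) ∧
    (Summable fun g : G =>
      ‖∑' a : G, lam a * mu (a⁻¹ * g)‖ * (f (L g) : ℝ)) ∧
    ∑' g : G, ‖∑' a : G, lam a * mu (a⁻¹ * g)‖ * (f (L g) : ℝ) ≤
      (∑' g : G, ‖lam g‖) *
        (∑' g : G, ‖mu g‖ * (f₂ (L g) : ℝ)) +
      (∑' g : G, ‖lam g‖ * (f₂ (L g) : ℝ)) *
        (∑' g : G, ‖mu g‖) := by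
  have hnorm : ∀ φ : G → ℂ, 0 ≤ fun g => ‖φ g‖ := fun φ g => norm_nonneg _
  have hweight : ∀ φ : G → ℂ, 0 ≤ fun g => ‖φ g‖ * (f₂ (L g) : ℝ) :=
    fun φ g => mul_nonneg (norm_nonneg _) (f₂ (L g)).2
  have hlm := hasSum_mul_inv_mul_of_nonneg (hnorm lam) (hnorm mu) hlam1 hmu1
  have hU := hasSum_mul_inv_mul_of_nonneg (hnorm lam) (hweight mu) hlam1 hmuf
  have hV := hasSum_mul_inv_mul_of_nonneg (hweight lam) (hnorm mu) hlamf hmu1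
  set F : G × G → ℝ := fun p => ‖lam p.2 * mu (p.2⁻¹ * p.1)‖ * f (L p.1)
  have hF0 : 0 ≤ F := fun p => mul_nonneg (norm_nonneg _) (f (L p.1)).2
  have hFle : ∀ p : G × G, F p ≤ ‖lam p.2‖ * (‖mu (p.2⁻¹ * p.1)‖ * f₂ (L (p.2⁻¹ * p.1))) +
      ‖lam p.2‖ * f₂ (L p.2) * ‖mu (p.2⁻¹ * p.1)‖ := fun ⟨g, a⟩ =>
    calc F (g, a) ≤ ‖lam a * mu (a⁻¹ * g)‖ * ↑(f₂ (L a) + f₂ (L (a⁻¹ * g))) :=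
          mul_le_mul_of_nonneg_left (mod_cast hf.apply_length_le_add hff₂ hLmul a g)
            (norm_nonneg _)
      _ = _ := by rw [norm_mul, NNReal.coe_add]; ring
  have hF : Summable F := (hU.add hV).summable.of_nonneg_of_le hF0 hFle
  have hpt : ∀ g : G, Summable fun a : G => ‖lam a * mu (a⁻¹ * g)‖ := fun g => by
    simpa only [norm_mul] using hlm.summable.prod_factor g
  have hconv : ∀ g : G, ‖∑' a : G, lam a * mu (a⁻¹ * g)‖ * (f (L g) : ℝ) ≤ ∑' a, F (g, a) :=
    fun g => (mul_le_mul_of_nonneg_right (norm_tsum_le_tsum_norm (hpt g)) (f (L g)).2).trans_eq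
      tsum_mul_right.symm
  obtain ⟨hS, hS_le⟩ := hF.tsum_le_tsum_prod_of_le_tsum hF0
    (fun g => mul_nonneg (norm_nonneg _) (f (L g)).2) hconv
  exact ⟨hpt, hS, hS_le.trans <|
    (hF.tsum_le_tsum hFle (hU.add hV).summable).trans_eq (hU.add hV).tsum_eq⟩

/-- **Proposition 1.2.3(viii).** The weighted ℓ¹-space of a group with length function is
closed under convolution: if `f(2t) ≤ f₂(t)` and `lam, mu` are ℓ¹ and `f₂`-weighted ℓ¹,
then the convolution `lam * mu` converges absolutely pointwise and its `f`-weighted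
ℓ¹-norm is bounded by `‖lam‖₁ ‖mu‖_{f₂} + ‖lam‖_{f₂} ‖mu‖₁`. -/
theorem stmt_3 {G : Type*} [Group G] [Countable G]
    (L : G → ℝ≥0) (hL1 : L 1 = 0) (hLinv : ∀ g : G, L g⁻¹ = L g)
    (hLmul : ∀ g h : G, L (g * h) ≤ L g + L h)
    (f f₂ : ℝ≥0 → ℝ≥0) (hf : Monotone f) (hf₂ : Monotone f₂)
    (hff₂ : ∀ t : ℝ≥0, f (2 * t) ≤ f₂ t)
    (lam mu : G → ℂ)
    (hlam1 : Summable fun g => ‖lam g‖)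
    (hmu1 : Summable fun g => ‖mu g‖)
    (hlamf : Summable fun g => ‖lam g‖ * (f₂ (L g) : ℝ))
    (hmuf : Summable fun g => ‖mu g‖ * (f₂ (L g) : ℝ)) :
    (∀ g : G, Summable fun a : G => ‖lam a * mu (a⁻¹ * g)‖) ∧
    (Summable fun g : G =>
      ‖∑' a : G, lam a * mu (a⁻¹ * g)‖ * (f (L g) : ℝ)) ∧
    ∑' g : G, ‖∑' a : G, lam a * mu (a⁻¹ * g)‖ * (f (L g) : ℝ) ≤
      (∑' g : G, ‖lam g‖) *
        (∑' g : G, ‖mu g‖ * (f₂ (L g) : ℝ)) +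
      (∑' g : G, ‖lam g‖ * (f₂ (L g) : ℝ)) *
        (∑' g : G, ‖mu g‖) :=
  stmt_3_general L hLmul f f₂ hf hff₂ lam mu hlam1 hmu1 hlamf hmuf
end

section
/- Let X be a countable set, w : X → ℝ≥0 a proper weight function, and (f_k)_{k≥1} a sequence of nondecreasing functions ℝ≥0 → ℝ with strictly positive values satisfying 2 f_k(t) ≤ f_{k+1}(t) for all t ≥ 0 and k ≥ 1. Suppose ψ : X → ℂ is such that for every k there exists x ∈ X with |ψ(x)| ≥ f_k(w(x)). Then there exists α : X → ℂ such that for every n the family x ↦ |α(x)| f_n(w(x)) is summable, but the family x ↦ |α(x)·ψ(x)| is not summable. (This is the key construction in Lemma 1.2.4, identifying the continuous dual of H_{B,w}(X) with the space of B-bounded functions.) -/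
/-!
Choose `x k` with `f k (w (x k)) ≤ ‖ψ (x k)‖`. Since `f k t ≥ 2 ^ k * f 0 t → ∞`, each point is
chosen only finitely often, so `S = {x k}` is infinite. Take `α = 1 / ψ` on `S` and `0` elsewhere:
then `‖α * ψ‖ = 1` on the infinite set `S`, while writing each `y ∈ S` as `x k` gives
`‖α y‖ * f n (w y) ≤ 2 ^ n / 2 ^ k` as soon as `k ≥ n`, a geometric tail.
-/

open Set Filter

section Doubling

variable {β : Type*} {F : ℕ → β → ℝ}

theorem two_pow_mul_le_of_two_mul_le (hdouble : ∀ k b, 2 * F k b ≤ F (k + 1) b)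
    (k m : ℕ) (b : β) : 2 ^ m * F k b ≤ F (k + m) b := by
  induction m with
  | zero => simp
  | succ m ih =>
    calc 2 ^ (m + 1) * F k b = 2 * (2 ^ m * F k b) := by ring
      _ ≤ 2 * F (k + m) b := by gcongr
      _ ≤ F (k + m + 1) b := hdouble _ _

theorem tendsto_atTop_of_two_mul_le (hpos : ∀ k b, 0 < F k b)
    (hdouble : ∀ k b, 2 * F k b ≤ F (k + 1) b) (b : β) :
    Tendsto (fun k => F k b) atTop atTop := by
  have hgeom : Tendsto (fun k : ℕ => (2 : ℝ) ^ k * F 0 b) atTop atTop :=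
    (tendsto_pow_atTop_atTop_of_one_lt one_lt_two).atTop_mul_const (hpos 0 b)
  refine tendsto_atTop_mono (fun k => ?_) hgeom
  simpa using two_pow_mul_le_of_two_mul_le hdouble 0 k b

theorem finite_setOf_le_of_two_mul_le (hpos : ∀ k b, 0 < F k b)
    (hdouble : ∀ k b, 2 * F k b ≤ F (k + 1) b) (b : β) (c : ℝ) :
    {k | F k b ≤ c}.Finite := by
  have := (tendsto_atTop_of_two_mul_le hpos hdouble b).eventually_gt_atTop c
  rw [← Nat.cofinite_eq_atTop, eventually_cofinite] at this
  simpa using this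

theorem mul_two_pow_le_of_two_mul_le (hdouble : ∀ k b, 2 * F k b ≤ F (k + 1) b)
    {n k : ℕ} (hnk : n ≤ k) (b : β) : F n b * 2 ^ k ≤ 2 ^ n * F k b := by
  obtain ⟨m, rfl⟩ := Nat.exists_eq_add_of_le hnk
  calc F n b * 2 ^ (n + m) = 2 ^ n * (2 ^ m * F n b) := by ring
    _ ≤ 2 ^ n * F (n + m) b := by gcongr; exact two_pow_mul_le_of_two_mul_le hdouble n m b

theorem exists_infinite_forall_summable_div (hpos : ∀ k b, 0 < F k b)
    (hdouble : ∀ k b, 2 * F k b ≤ F (k + 1) b) {a : β → ℝ} (ha : ∀ k, ∃ b, F k b ≤ a b) :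
    ∃ S : Set β, S.Infinite ∧ (∀ b ∈ S, 0 < a b) ∧
      ∀ n, Summable fun b : S => F n b / a b := by
  choose u hu using ha
  have hu_pos : ∀ k, 0 < a (u k) := fun k => (hpos k (u k)).trans_le (hu k)
  have hfiber : ∀ b, (u ⁻¹' {b}).Finite := fun b =>
    (finite_setOf_le_of_two_mul_le hpos hdouble b (a b)).subset fun k (hk : u k = b) => hk ▸ hu k
  refine ⟨range u, fun hfin => infinite_univ (α := ℕ) ?_, ?_, fun n => ?_⟩
  · simpa using hfin.preimage' fun b _ => hfiber b
  · rintro _ ⟨k, rfl⟩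
    exact hu_pos k
  · set K := rangeSplitting u
    have hK : ∀ b, u (K b) = b := apply_rangeSplitting u
    have hbound : ∀ b : range u, n ≤ K b → F n b / a b ≤ 2 ^ n * (1 / 2) ^ K b := by
      intro b hb
      rw [one_div, inv_pow, ← div_eq_mul_inv, ← hK b, div_le_div_iff₀ (hu_pos _) (by positivity)]
      calc F n (u (K b)) * 2 ^ K b ≤ 2 ^ n * F (K b) (u (K b)) :=
            mul_two_pow_le_of_two_mul_le hdouble hb _
        _ ≤ 2 ^ n * a (u (K b)) := by gcongr; exact hu _
    refine .of_norm_bounded_eventually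
      ((summable_geometric_two.mul_left (2 ^ n)).comp_injective (rangeSplitting_injective u)) ?_
    filter_upwards [(rangeSplitting_injective u).tendsto_cofinite.eventually
      (Nat.cofinite_eq_atTop ▸ eventually_ge_atTop n)] with b hb
    rw [Real.norm_of_nonneg (div_nonneg (hpos n b).le (hK b ▸ hu_pos _).le)]
    exact hbound b hb

end Doubling

open NNReal

theorem stmt_4_general {X : Type*} (w : X → ℝ≥0)
    (f : ℕ → ℝ≥0 → ℝ)
    (hpos : ∀ k t, 0 < f k t)
    (hdouble : ∀ k t, 2 * f k t ≤ f (k + 1) t)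
    (ψ : X → ℂ)
    (hψ : ∀ k : ℕ, ∃ x : X, f k (w x) ≤ ‖ψ x‖) :
    ∃ α : X → ℂ,
      (∀ n : ℕ, Summable fun x => ‖α x‖ * f n (w x)) ∧
      ¬ Summable (fun x => ‖α x * ψ x‖) := by
  obtain ⟨S, hS_inf, hS_pos, hS_sum⟩ :=
    exists_infinite_forall_summable_div (F := fun k x => f k (w x))
      (fun k x => hpos k (w x)) (fun k x => hdouble k (w x)) hψ
  refine ⟨S.indicator fun x => ((‖ψ x‖⁻¹ : ℝ) : ℂ), fun n => ?_, fun hsum => hS_inf ?_⟩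
  · have hweighted : (fun x => ‖S.indicator (fun x => ((‖ψ x‖⁻¹ : ℝ) : ℂ)) x‖ * f n (w x)) =
        S.indicator fun x => f n (w x) / ‖ψ x‖ := by
      ext x
      by_cases hx : x ∈ S <;> simp [hx, div_eq_inv_mul]
    rw [hweighted, ← summable_subtype_iff_indicator]
    exact hS_sum n
  · have hprod : (fun x => ‖S.indicator (fun x => ((‖ψ x‖⁻¹ : ℝ) : ℂ)) x * ψ x‖) = S.indicator 1 := by
      ext x
      by_cases hx : x ∈ S
      · simp [hx, (hS_pos x hx).ne']
      · simp [hx]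
    rw [hprod, ← summable_subtype_iff_indicator] at hsum
    exact finite_coe_iff.mp (Finite.of_summable_const one_pos hsum)

/-- **Key construction in Lemma 1.2.4.** Let `w` be a proper weight on a countable set `X`
and `(f k)` a sequence of nondecreasing positive functions with `2 f_k ≤ f_{k+1}`.
If `ψ` is not dominated by any `f_k` (for every `k` some `x` has `|ψ x| ≥ f_k (w x)`),
then there is `α` lying in all the weighted ℓ¹-spaces for which `α·ψ` is not ℓ¹. -/
theorem stmt_4 {X : Type*} [Countable X] (w : X → ℝ≥0)
    (hw : ∀ C : ℝ≥0, {x : X | w x ≤ C}.Finite)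
    (f : ℕ → ℝ≥0 → ℝ)
    (hmono : ∀ k, Monotone (f k))
    (hpos : ∀ k t, 0 < f k t)
    (hdouble : ∀ k t, 2 * f k t ≤ f (k + 1) t)
    (ψ : X → ℂ)
    (hψ : ∀ k : ℕ, ∃ x : X, f k (w x) ≤ ‖ψ x‖) :
    ∃ α : X → ℂ,
      (∀ n : ℕ, Summable fun x => ‖α x‖ * f n (w x)) ∧
      ¬ Summable (fun x => ‖α x * ψ x‖) :=
  stmt_4_general w f hpos hdouble ψ hψ
end

section
/- Let (X, d) be a geodesic metric space that is δ-hyperbolic for some δ ≥ 0. For every k ≥ 1 there is a constant Ñ(k) such that: for every k-quasigeodesic p : [a,b] → X and every geodesic γ from p(a) to p(b), the image of p is contained in the closed Ñ(k)-neighborhood of the image of γ. Moreover, for fixed δ, Ñ(k) can be chosen bounded above by a polynomial function of k. (Lemma 2.2.5, the quantitative Morse lemma.) -/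
open Metric Set

/-- A geodesic from `x` to `y`: an isometric parametrization of `[0, dist x y]`
with the correct endpoints. -/
def IsGeodesicSegment {X : Type*} [MetricSpace X] (x y : X) (γ : ℝ → X) : Prop :=
  γ 0 = x ∧ γ (dist x y) = y ∧
    ∀ s ∈ Set.Icc (0 : ℝ) (dist x y), ∀ t ∈ Set.Icc (0 : ℝ) (dist x y),
      dist (γ s) (γ t) = |s - t|

/-- A geodesic metric space: any two points are joined by a geodesic. -/
def GeodesicSpace (X : Type*) [MetricSpace X] : Prop :=
  ∀ x y : X, ∃ γ : ℝ → X, IsGeodesicSegment x y γ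

/-- `δ`-hyperbolicity via slim triangles: each side of any geodesic triangle is
contained in the closed `δ`-neighborhood of the union of the other two sides. -/
def SlimTriangles {X : Type*} [MetricSpace X] (δ : ℝ) : Prop :=
  ∀ x y z : X, ∀ γ₁ γ₂ γ₃ : ℝ → X,
    IsGeodesicSegment x y γ₁ → IsGeodesicSegment y z γ₂ → IsGeodesicSegment x z γ₃ →
      γ₁ '' Set.Icc 0 (dist x y) ⊆
        Metric.cthickening δ (γ₂ '' Set.Icc 0 (dist y z) ∪ γ₃ '' Set.Icc 0 (dist x z)) ∧
      γ₂ '' Set.Icc 0 (dist y z) ⊆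
        Metric.cthickening δ (γ₁ '' Set.Icc 0 (dist x y) ∪ γ₃ '' Set.Icc 0 (dist x z)) ∧
      γ₃ '' Set.Icc 0 (dist x z) ⊆
        Metric.cthickening δ (γ₁ '' Set.Icc 0 (dist x y) ∪ γ₂ '' Set.Icc 0 (dist y z))

/-- A `k`-quasigeodesic defined on `[a,b]`. -/
def IsQuasigeodesic {X : Type*} [MetricSpace X] (k a b : ℝ) (p : ℝ → X) : Prop :=
  ∀ s ∈ Set.Icc a b, ∀ t ∈ Set.Icc a b,
    (1 / k) * |s - t| - k ≤ dist (p s) (p t) ∧ dist (p s) (p t) ≤ k * |s - t| + k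

/-!
Bisecting a chain of at most `2 ^ m` points with steps at most `g` and using slim triangles, any
point of a geodesic joining its ends is within `δ m + g / 2` of the chain. Take a point `γ s₀` of
the geodesic at maximal distance `D` from the quasigeodesic `p` and a chain of points of `p` from
near `γ (s₀ - D)` to near `γ (s₀ + D)`: it has `O(k² (D + 1))` points, all at distance at least
`D` from `γ s₀`, so `D ≤ δ log₂ (k² (D + 1)) + k + D / 2 + O(δ)`, which forces `D = O(k)`.
Conversely, the geodesic is connected and covered by the neighbourhoods of `p [a, t]` and
`p [t, b]`, so one of its points is close to both, which confines `p t` to an `O(k³)`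
neighbourhood of the geodesic.
-/

namespace IsGeodesicSegment

variable {X : Type*} [MetricSpace X] {x y : X} {γ : ℝ → X}

lemma lipschitzOnWith (h : IsGeodesicSegment x y γ) :
    LipschitzOnWith 1 γ (Icc 0 (dist x y)) :=
  LipschitzOnWith.of_dist_le_mul fun s hs t ht => by
    rw [h.2.2 s hs t ht, Real.dist_eq, NNReal.coe_one, one_mul]

lemma isCompact_image (h : IsGeodesicSegment x y γ) : IsCompact (γ '' Icc 0 (dist x y)) :=
  isCompact_Icc.image_of_continuousOn h.lipschitzOnWith.continuousOn

lemma dist_left (h : IsGeodesicSegment x y γ) {s : ℝ} (hs : s ∈ Icc 0 (dist x y)) :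
    dist (γ s) x = s := by
  rw [← h.1, h.2.2 s hs 0 ⟨le_rfl, dist_nonneg⟩, sub_zero, abs_of_nonneg hs.1]

lemma dist_right (h : IsGeodesicSegment x y γ) {s : ℝ} (hs : s ∈ Icc 0 (dist x y)) :
    dist (γ s) y = dist x y - s := by
  conv_lhs => rw [← h.2.1]
  rw [h.2.2 s hs _ ⟨dist_nonneg, le_rfl⟩, abs_sub_comm, abs_of_nonneg (sub_nonneg.2 hs.2)]

lemma dist_apply (h : IsGeodesicSegment x y γ) {s t : ℝ} (hs : s ∈ Icc 0 (dist x y))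
    (ht : t ∈ Icc 0 (dist x y)) (hst : s ≤ t) : dist (γ s) (γ t) = t - s := by
  rw [h.2.2 s hs t ht, abs_sub_comm, abs_of_nonneg (sub_nonneg.2 hst)]

lemma subsegment (h : IsGeodesicSegment x y γ) {s t : ℝ} (hs : 0 ≤ s) (hst : s ≤ t)
    (ht : t ≤ dist x y) : IsGeodesicSegment (γ s) (γ t) (fun r => γ (s + r)) := by
  have hd := h.dist_apply ⟨hs, hst.trans ht⟩ ⟨hs.trans hst, ht⟩ hst
  refine ⟨by simp, by simp [hd], fun r hr r' hr' => ?_⟩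
  rw [hd] at hr hr'
  rw [h.2.2 _ ⟨by linarith [hr.1], by linarith [hr.2]⟩ _ ⟨by linarith [hr'.1], by linarith [hr'.2]⟩]
  ring_nf

end IsGeodesicSegment

section Hyperbolic

variable {X : Type*} [MetricSpace X] {δ : ℝ}

lemma SlimTriangles.exists_dist_le (hslim : SlimTriangles (X := X) δ) (hδ : 0 ≤ δ)
    {x y z q : X} {γ₁ γ₂ γ₃ : ℝ → X} (h₁ : IsGeodesicSegment x y γ₁)
    (h₂ : IsGeodesicSegment y z γ₂) (h₃ : IsGeodesicSegment x z γ₃)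
    (hq : q ∈ γ₃ '' Icc 0 (dist x z)) :
    ∃ q' ∈ γ₁ '' Icc 0 (dist x y) ∪ γ₂ '' Icc 0 (dist y z), dist q q' ≤ δ := by
  have hq := (hslim x y z γ₁ γ₂ γ₃ h₁ h₂ h₃).2.2 hq
  rw [(h₁.isCompact_image.union h₂.isCompact_image).cthickening_eq_biUnion_closedBall hδ,
    mem_iUnion₂] at hq
  obtain ⟨q', hq', hqq'⟩ := hq
  exact ⟨q', hq', hqq'⟩

/-- Bisect the chain and apply slimness to the triangle formed by its two endpoints and its
midpoint; each of the `m` halvings costs `δ`. -/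
theorem SlimTriangles.exists_dist_chain_le (hgeo : GeodesicSpace X)
    (hslim : SlimTriangles (X := X) δ) (hδ : 0 ≤ δ) {g : ℝ} (m : ℕ) :
    ∀ n : ℕ, 1 ≤ n → n ≤ 2 ^ m → ∀ c : ℕ → X, (∀ i < n, dist (c i) (c (i + 1)) ≤ g) →
      ∀ γ : ℝ → X, IsGeodesicSegment (c 0) (c n) γ →
        ∀ q ∈ γ '' Icc 0 (dist (c 0) (c n)), ∃ i ≤ n, dist q (c i) ≤ δ * m + g / 2 := by
  induction m with
  | zero =>
    intro n hn₁ hn₂ c hgap γ hγ q hq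
    obtain rfl : n = 1 := by simp at hn₂; omega
    obtain ⟨s, hs, rfl⟩ := hq
    have hg := hgap 0 one_pos
    rcases le_or_gt s (dist (c 0) (c 1) / 2) with hs' | hs'
    · exact ⟨0, Nat.zero_le _, by rw [hγ.dist_left hs]; push_cast; linarith⟩
    · exact ⟨1, le_rfl, by rw [hγ.dist_right hs]; push_cast; linarith⟩
  | succ m ih =>
    intro n hn₁ hn₂ c hgap γ hγ q hq
    rcases le_or_gt n (2 ^ m) with hle | hlt
    · obtain ⟨i, hi, hqi⟩ := ih n hn₁ hle c hgap γ hγ q hq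
      exact ⟨i, hi, hqi.trans (by push_cast; nlinarith)⟩
    set j := 2 ^ m
    have hnj : n - j ≤ 2 ^ m := by rw [pow_succ] at hn₂; omega
    obtain ⟨γ₁, hγ₁⟩ := hgeo (c 0) (c j)
    obtain ⟨γ₂, hγ₂⟩ := hgeo (c j) (c n)
    obtain ⟨q', hq', hqq'⟩ := hslim.exists_dist_le hδ hγ₁ hγ₂ hγ hq
    obtain ⟨i, hi, hq'i⟩ : ∃ i ≤ n, dist q' (c i) ≤ δ * m + g / 2 := by
      rcases hq' with hq' | hq'
      · obtain ⟨i, hi, hq'i⟩ := ih j Nat.one_le_two_pow le_rfl c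
          (fun i hi => hgap i (hi.trans hlt)) γ₁ hγ₁ q' hq'
        exact ⟨i, hi.trans hlt.le, hq'i⟩
      · have hjn : j + (n - j) = n := by omega
        rw [← hjn, ← add_zero j] at hγ₂ hq'
        obtain ⟨i, hi, hq'i⟩ := ih (n - j) (by omega) hnj (fun i => c (j + i))
          (fun i hi => by simpa [add_assoc] using hgap (j + i) (by omega)) γ₂ hγ₂ q' hq'
        exact ⟨j + i, by omega, hq'i⟩
    refine ⟨i, hi, ?_⟩
    calc dist q (c i) ≤ dist q q' + dist q' (c i) := dist_triangle _ _ _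
      _ ≤ δ + (δ * m + g / 2) := add_le_add hqq' hq'i
      _ = δ * (m + 1 : ℕ) + g / 2 := by push_cast; ring

end Hyperbolic

section Quasigeodesic

variable {X : Type*} [MetricSpace X] {k a b : ℝ} {p : ℝ → X}

lemma IsQuasigeodesic.abs_sub_le (hp : IsQuasigeodesic k a b p) (hk : 0 < k) {u v : ℝ}
    (hu : u ∈ Icc a b) (hv : v ∈ Icc a b) : |u - v| ≤ k * (dist (p u) (p v) + k) := by
  have h := (hp u hu v hv).1
  rw [← div_le_iff₀' hk]
  linarith [one_div_mul_eq_div k |u - v|]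

lemma IsQuasigeodesic.exists_chain (hp : IsQuasigeodesic k a b p) (hk : 0 ≤ k) {u v : ℝ}
    (hu : u ∈ Icc a b) (hv : v ∈ Icc a b) :
    ∃ n : ℕ, (n : ℝ) ≤ |v - u| + 2 ∧ ∃ T : ℕ → ℝ, T 0 = u ∧ T n = v ∧
      (∀ i ≤ n, T i ∈ Icc a b) ∧ ∀ i < n, dist (p (T i)) (p (T (i + 1))) ≤ 2 * k := by
  set n := ⌈|v - u|⌉₊ + 1
  have hn : (0 : ℝ) < n := by positivity
  set T : ℕ → ℝ := fun i => u + ((i : ℝ) / n) * (v - u)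
  have hT : ∀ i ≤ n, T i ∈ Icc a b := fun i hi =>
    (convex_Icc a b).add_smul_sub_mem (𝕜 := ℝ) hu hv
      ⟨by positivity, div_le_one_of_le₀ (by exact_mod_cast hi) hn.le⟩
  have hstep : ∀ i, |T i - T (i + 1)| ≤ 1 := fun i => by
    have hvu : |v - u| ≤ n := (Nat.le_ceil _).trans (by simp [n])
    rw [show T i - T (i + 1) = -((v - u) / n) by simp only [T]; push_cast; ring, abs_neg,
      abs_div, abs_of_pos hn]
    exact div_le_one_of_le₀ hvu hn.le
  refine ⟨n, ?_, T, by simp [T], by simp only [T]; field_simp; ring, hT, fun i hi => ?_⟩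
  · simp only [n, Nat.cast_add, Nat.cast_one]
    linarith [Nat.ceil_lt_add_one (abs_nonneg (v - u))]
  · calc dist (p (T i)) (p (T (i + 1))) ≤ k * |T i - T (i + 1)| + k :=
          (hp _ (hT i hi.le) _ (hT (i + 1) hi)).2
      _ ≤ k * 1 + k := by gcongr; exact hstep i
      _ = 2 * k := by ring

lemma IsQuasigeodesic.exists_chain_between (hp : IsQuasigeodesic k a b p) (hk : 0 ≤ k)
    {u v g : ℝ} (hu : u ∈ Icc a b) (hv : v ∈ Icc a b) {y z : X} (hy : dist y (p u) ≤ g)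
    (hz : dist (p v) z ≤ g) :
    ∃ n : ℕ, 1 ≤ n ∧ (n : ℝ) ≤ |v - u| + 4 ∧ ∃ c : ℕ → X, c 0 = y ∧ c n = z ∧
      (∀ i ≤ n, c i = y ∨ c i = z ∨ c i ∈ p '' Icc a b) ∧
      ∀ i < n, dist (c i) (c (i + 1)) ≤ max (2 * k) g := by
  obtain ⟨n, hn, T, hT0, hTn, hT, hgap⟩ := hp.exists_chain hk hu hv
  refine ⟨n + 2, by omega, by push_cast; linarith,
    fun i => if i = 0 then y else if i = n + 2 then z else p (T (i - 1)), by simp, by simp,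
    fun i hi => ?_, ?_⟩
  · dsimp only
    split_ifs
    · exact .inl rfl
    · exact .inr (.inl rfl)
    · exact .inr (.inr (mem_image_of_mem p (hT _ (by omega))))
  rintro (_ | i) hi
  · simpa [hT0] using le_max_of_le_right hy
  rcases (show i < n ∨ i = n by omega) with hi | rfl
  · simpa [show i ≠ n + 1 by omega, show i ≠ n by omega] using le_max_of_le_left (hgap i hi)
  · simpa [hTn] using le_max_of_le_right hz

theorem IsQuasigeodesic.image_subset_cthickening {w R : ℝ} {γ : ℝ → X}
    (hp : IsQuasigeodesic k a b p) (hk : 0 < k) (hw : 0 ≤ w)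
    (hγ : ContinuousOn γ (Icc 0 w)) (hγ₀ : γ 0 = p a) (hγw : γ w = p b)
    (hR : ∀ s ∈ Icc 0 w, ∃ u ∈ Icc a b, dist (γ s) (p u) ≤ R) :
    p '' Icc a b ⊆ cthickening (R + 1 + k ^ 2 * (2 * R + 2 + k) + k) (γ '' Icc 0 w) := by
  rintro _ ⟨t, ht, rfl⟩
  have hR₀ : 0 ≤ R := by
    obtain ⟨u, -, hu⟩ := hR 0 ⟨le_rfl, hw⟩
    exact dist_nonneg.trans hu
  have hcover : γ '' Icc 0 w ⊆
      cthickening R (p '' Icc a t) ∪ cthickening R (p '' Icc t b) := by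
    rintro _ ⟨s, hs, rfl⟩
    obtain ⟨u, hu, hsu⟩ := hR s hs
    rcases le_total u t with hut | htu
    · exact .inl (mem_cthickening_of_dist_le _ _ _ _ (mem_image_of_mem p ⟨hu.1, hut⟩) hsu)
    · exact .inr (mem_cthickening_of_dist_le _ _ _ _ (mem_image_of_mem p ⟨htu, hu.2⟩) hsu)
  obtain ⟨x, hx, hx₁, hx₂⟩ := isPreconnected_closed_iff.1
    (isPreconnected_Icc.image γ hγ) _ _ isClosed_cthickening isClosed_cthickening hcover
    ⟨p a, ⟨0, ⟨le_rfl, hw⟩, hγ₀⟩, self_subset_cthickening _ ⟨a, ⟨le_rfl, ht.1⟩, rfl⟩⟩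
    ⟨p b, ⟨w, ⟨hw, le_rfl⟩, hγw⟩, self_subset_cthickening _ ⟨b, ⟨ht.2, le_rfl⟩, rfl⟩⟩
  obtain ⟨_, ⟨u, hu, rfl⟩, hxu⟩ := mem_thickening_iff.1
    (cthickening_subset_thickening' (by linarith) (lt_add_one R) _ hx₁)
  obtain ⟨_, ⟨u', hu', rfl⟩, hxu'⟩ := mem_thickening_iff.1
    (cthickening_subset_thickening' (by linarith) (lt_add_one R) _ hx₂)
  have huab : u ∈ Icc a b := ⟨hu.1, hu.2.trans ht.2⟩
  have hu'ab : u' ∈ Icc a b := ⟨ht.1.trans hu'.1, hu'.2⟩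
  have htu : |t - u| ≤ k * (2 * R + 2 + k) := by
    have huu' : dist (p u) (p u') ≤ 2 * R + 2 := by
      linarith [dist_triangle (p u) x (p u'), dist_comm x (p u)]
    calc |t - u| ≤ |u - u'| := by
          rw [abs_of_nonneg (by linarith [hu.2]), abs_sub_comm,
            abs_of_nonneg (by linarith [hu.2, hu'.1])]
          linarith [hu'.1]
      _ ≤ k * (dist (p u) (p u') + k) := hp.abs_sub_le hk huab hu'ab
      _ ≤ k * (2 * R + 2 + k) := by gcongr
  refine mem_cthickening_of_dist_le _ x _ _ hx ?_
  calc dist (p t) x ≤ dist (p t) (p u) + dist (p u) x := dist_triangle _ _ _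
    _ ≤ (k * |t - u| + k) + (R + 1) := by
        gcongr
        · exact (hp t ht u huab).2
        · rw [dist_comm]; exact hxu.le
    _ ≤ (k * (k * (2 * R + 2 + k)) + k) + (R + 1) := by gcongr
    _ = R + 1 + k ^ 2 * (2 * R + 2 + k) + k := by ring

end Quasigeodesic

lemma exists_linear_bound_of_le_mul_logb {δ : ℝ} (hδ : 0 ≤ δ) :
    ∃ A B : ℝ, ∀ k D : ℝ, 1 ≤ k → 0 ≤ D →
      D ≤ δ * (Real.logb 2 (12 * k ^ 2 * (D + 1)) + 1) + k + (D + 1) / 2 → D ≤ A + B * k := by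
  set c := δ / Real.log 2
  have hc : 0 ≤ c := div_nonneg hδ (Real.log_pos one_lt_two).le
  refine ⟨4 * (c * Real.log 12 + c * Real.log (4 * c + 1) + δ + 1), 4 * (2 * c + 1),
    fun k D hk hD h => ?_⟩
  have hlogk : c * Real.log k ≤ c * k :=
    mul_le_mul_of_nonneg_left ((Real.log_le_sub_one_of_pos (by linarith)).trans (by linarith)) hc
  -- `log y ≤ y / M + log M - 1`, with `M = 4c + 1` so that `c / M ≤ 1 / 4`
  have hlogD : c * Real.log (D + 1) ≤ (D + 1) / 4 + c * Real.log (4 * c + 1) := by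
    have h₁ := Real.log_le_sub_one_of_pos (x := (D + 1) / (4 * c + 1)) (by positivity)
    rw [Real.log_div (by positivity) (by positivity)] at h₁
    have h₂ : c * ((D + 1) / (4 * c + 1)) ≤ (D + 1) / 4 := by
      rw [mul_div_assoc', div_le_div_iff₀ (by positivity) (by norm_num)]
      nlinarith
    nlinarith
  have hlog : δ * Real.logb 2 (12 * k ^ 2 * (D + 1))
      = c * Real.log 12 + 2 * (c * Real.log k) + c * Real.log (D + 1) := by
    rw [Real.logb, Real.log_mul (by positivity) (by positivity),
      Real.log_mul (by norm_num) (by positivity), Real.log_pow]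
    simp only [c]
    push_cast
    ring
  nlinarith

lemma Nat.clog_two_lt_logb_add_one (n : ℕ) : (Nat.clog 2 n : ℝ) < Real.logb 2 n + 1 := by
  have h := Real.natCeil_logb_natCast 2 n
  rw [Nat.cast_ofNat] at h
  rw [← h]
  exact Nat.ceil_lt_add_one (div_nonneg (Real.log_natCast_nonneg n) (Real.log_nonneg one_le_two))

section Morse

variable {X : Type*} [MetricSpace X] {δ k a b : ℝ} {p γ : ℝ → X}

theorem SlimTriangles.exists_dist_le_logb (hgeo : GeodesicSpace X)
    (hslim : SlimTriangles (X := X) δ) (hδ : 0 ≤ δ) (hp : IsQuasigeodesic k a b p) (hk : 0 ≤ k)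
    {u v g : ℝ} (hu : u ∈ Icc a b) (hv : v ∈ Icc a b) {y z q : X}
    (hγ : IsGeodesicSegment y z γ) (hy : dist y (p u) ≤ g) (hz : dist (p v) z ≤ g)
    (hq : q ∈ γ '' Icc 0 (dist y z)) :
    ∃ x, (x = y ∨ x = z ∨ x ∈ p '' Icc a b) ∧
      dist q x ≤ δ * (Real.logb 2 (|v - u| + 4) + 1) + max (2 * k) g / 2 := by
  obtain ⟨n, hn₁, hn, c, rfl, rfl, hc, hgap⟩ := hp.exists_chain_between hk hu hv hy hz
  obtain ⟨i, hi, hqi⟩ := hslim.exists_dist_chain_le hgeo hδ (Nat.clog 2 n) n hn₁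
    (Nat.le_pow_clog one_lt_two _) c hgap γ hγ q hq
  refine ⟨c i, hc i hi, hqi.trans ?_⟩
  have hlog := Real.logb_le_logb_of_le (b := 2) one_lt_two (by positivity) hn
  gcongr
  linarith [Nat.clog_two_lt_logb_add_one n]

theorem SlimTriangles.farthest_dist_le_logb (hgeo : GeodesicSpace X)
    (hslim : SlimTriangles (X := X) δ) (hδ : 0 ≤ δ) (hk : 1 ≤ k) (hab : a ≤ b)
    (hp : IsQuasigeodesic k a b p) (hγ : IsGeodesicSegment (p a) (p b) γ) {s₀ D : ℝ}
    (hs₀ : s₀ ∈ Icc 0 (dist (p a) (p b))) (hfar : ∀ u ∈ Icc a b, D ≤ dist (γ s₀) (p u))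
    (hmax : ∀ s ∈ Icc 0 (dist (p a) (p b)), infDist (γ s) (p '' Icc a b) ≤ D) :
    D ≤ δ * (Real.logb 2 (12 * k ^ 2 * (D + 1)) + 1) + k + (D + 1) / 2 := by
  have hD : 0 ≤ D := infDist_nonneg.trans (hmax 0 ⟨le_rfl, dist_nonneg⟩)
  have hP : (p '' Icc a b).Nonempty := ⟨p a, a, ⟨le_rfl, hab⟩, rfl⟩
  have hnear : ∀ s ∈ Icc 0 (dist (p a) (p b)), ∃ u ∈ Icc a b, dist (γ s) (p u) < D + 1 :=
    fun s hs => by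
      obtain ⟨_, ⟨u, hu, rfl⟩, h⟩ := (infDist_lt_iff hP).1 ((hmax s hs).trans_lt (lt_add_one D))
      exact ⟨u, hu, h⟩
  have hs₁ : s₀ - D ∈ Icc 0 (dist (p a) (p b)) := by
    have := hfar a ⟨le_rfl, hab⟩
    rw [hγ.dist_left hs₀] at this
    constructor <;> linarith [hs₀.2]
  have hs₂ : s₀ + D ∈ Icc 0 (dist (p a) (p b)) := by
    have := hfar b ⟨hab, le_rfl⟩
    rw [hγ.dist_right hs₀] at this
    constructor <;> linarith [hs₀.1]
  have hyz : dist (γ (s₀ - D)) (γ (s₀ + D)) = 2 * D := by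
    rw [hγ.dist_apply hs₁ hs₂ (by linarith)]; ring
  obtain ⟨u, hu, hyu⟩ := hnear _ hs₁
  obtain ⟨v, hv, hzv⟩ := hnear _ hs₂
  have hq : γ s₀ ∈ (fun r => γ (s₀ - D + r)) '' Icc 0 (dist (γ (s₀ - D)) (γ (s₀ + D))) :=
    ⟨D, ⟨hD, by linarith⟩, by simp⟩
  obtain ⟨x, hx, hqx⟩ := hslim.exists_dist_le_logb hgeo hδ hp (by linarith) hu hv
    (hγ.subsegment hs₁.1 (by linarith) hs₂.2) hyu.le (by rw [dist_comm]; exact hzv.le) hq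
  have hDx : D ≤ dist (γ s₀) x := by
    rcases hx with rfl | rfl | ⟨t, ht, rfl⟩
    · rw [dist_comm, hγ.dist_apply hs₁ hs₀ (by linarith)]; linarith
    · rw [hγ.dist_apply hs₀ hs₂ (by linarith)]; linarith
    · exact hfar t ht
  have huv : |v - u| + 4 ≤ 12 * k ^ 2 * (D + 1) := by
    have hpuv : dist (p v) (p u) ≤ 4 * D + 2 := by
      linarith [dist_triangle4 (p v) (γ (s₀ + D)) (γ (s₀ - D)) (p u), dist_comm (p v) (γ (s₀ + D)),
        dist_comm (γ (s₀ + D)) (γ (s₀ - D))]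
    have := hp.abs_sub_le (by linarith) hv hu
    have : k * (dist (p v) (p u) + k) ≤ k * (4 * D + 2 + k) := by gcongr
    nlinarith [mul_nonneg (mul_nonneg hD (by linarith : 0 ≤ k)) (by linarith : 0 ≤ 2 * k - 1)]
  have hlog := Real.logb_le_logb_of_le (b := 2) one_lt_two (by positivity) huv
  have hg : max (2 * k) (D + 1) ≤ 2 * k + (D + 1) := max_le (by linarith) (by linarith)
  nlinarith

theorem SlimTriangles.exists_geodesic_near_quasigeodesic (hgeo : GeodesicSpace X)
    (hslim : SlimTriangles (X := X) δ) (hδ : 0 ≤ δ) :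
    ∃ A B : ℝ, ∀ k a b : ℝ, 1 ≤ k → a ≤ b → ∀ p : ℝ → X, IsQuasigeodesic k a b p →
      ∀ γ : ℝ → X, IsGeodesicSegment (p a) (p b) γ →
        ∀ s ∈ Icc 0 (dist (p a) (p b)), ∃ u ∈ Icc a b, dist (γ s) (p u) ≤ A + B * k := by
  obtain ⟨A, B, hAB⟩ := exists_linear_bound_of_le_mul_logb hδ
  refine ⟨A + 1, B, fun k a b hk hab p hp γ hγ s hs => ?_⟩
  set P := p '' Icc a b
  have hcont : ContinuousOn (fun s => infDist (γ s) P) (Icc 0 (dist (p a) (p b))) :=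
    (continuous_infDist_pt P).comp_continuousOn hγ.lipschitzOnWith.continuousOn
  obtain ⟨s₀, hs₀, hmax⟩ := isCompact_Icc.exists_isMaxOn (nonempty_Icc.2 dist_nonneg) hcont
  have hD := hAB k _ hk infDist_nonneg (hslim.farthest_dist_le_logb hgeo hδ hk hab hp hγ hs₀
    (fun u hu => infDist_le_dist_of_mem (mem_image_of_mem p hu)) fun s hs => hmax hs)
  obtain ⟨_, ⟨u, hu, rfl⟩, h⟩ := (infDist_lt_iff (s := P) ⟨p a, a, ⟨le_rfl, hab⟩, rfl⟩).1
    ((hmax hs).trans_lt (show infDist (γ s₀) P < A + 1 + B * k by linarith))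
  exact ⟨u, hu, h.le⟩

end Morse

/-- **Lemma 2.2.5 (quantitative Morse lemma).** In a `δ`-hyperbolic geodesic space,
every `k`-quasigeodesic stays within distance `Ñ(k)` of any geodesic with the same
endpoints, and `Ñ(k)` may be chosen bounded by a polynomial in `k`. -/
theorem stmt_6 {X : Type*} [MetricSpace X] (hgeo : GeodesicSpace X)
    (δ : ℝ) (hδ : 0 ≤ δ) (hslim : SlimTriangles (X := X) δ) :
    ∃ N : ℝ → ℝ,
      (∃ Q : Polynomial ℝ, ∀ k : ℝ, 1 ≤ k → N k ≤ Q.eval k) ∧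
      ∀ k : ℝ, 1 ≤ k → ∀ a b : ℝ, a ≤ b → ∀ p : ℝ → X, IsQuasigeodesic k a b p →
        ∀ γ : ℝ → X, IsGeodesicSegment (p a) (p b) γ →
          p '' Set.Icc a b ⊆
            Metric.cthickening (N k) (γ '' Set.Icc 0 (dist (p a) (p b))) := by
  obtain ⟨A, B, hAB⟩ := hslim.exists_geodesic_near_quasigeodesic hgeo hδ
  let Q : Polynomial ℝ := .C (A + 1) + .C (B + 1) * .X + .C (2 * A + 2) * .X ^ 2 +
    .C (2 * B + 1) * .X ^ 3
  refine ⟨Q.eval, ⟨Q, fun _ _ => le_rfl⟩, fun k hk a b hab p hp γ hγ => ?_⟩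
  refine (hp.image_subset_cthickening (by linarith) dist_nonneg
    hγ.lipschitzOnWith.continuousOn hγ.1 hγ.2.1 (hAB k a b hk hab p hp γ hγ)).trans
    (cthickening_mono (le_of_eq ?_) _)
  simp only [Q, Polynomial.eval_add, Polynomial.eval_mul, Polynomial.eval_pow,
    Polynomial.eval_C, Polynomial.eval_X]
  ring
end

section
/- Let G be a finitely generated group with finite symmetric generating set S and word length L_S, and suppose the metric d(g,h) := L_S(g⁻¹h) on G satisfies the Gromov four-point δ-hyperbolicity condition for some δ ≥ 0 (i.e. G is word-hyperbolic). Then there exist constants A, B ≥ 0 such that whenever u, v ∈ G are conjugate elements of infinite order, there exists g ∈ G with g⁻¹ v g = u and L_S(g) ≤ A·(L_S(u) + L_S(v)) + B. (Proposition 2.1.2(i): word-hyperbolic groups have a linear conjugacy bound on non-elliptic classes.) -/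
/-- The word length of `g` with respect to a generating set `S`: the least length of a
list of elements of `S` with product `g`. -/
noncomputable def wordLength {G : Type*} [Group G] (S : Set G) (g : G) : ℕ :=
  sInf {n : ℕ | ∃ l : List G, (∀ x ∈ l, x ∈ S) ∧ l.length = n ∧ l.prod = g}


open Pointwise

namespace WLaux

variable {G : Type*} [Group G] {S : Finset G}

lemma wl_le {g : G} {l : List G} (hl : ∀ x ∈ l, x ∈ (S : Set G)) (hp : l.prod = g) :
    wordLength (S : Set G) g ≤ l.length :=
  Nat.sInf_le ⟨l, hl, rfl, hp⟩

lemma exists_list (hsymm : ∀ s ∈ S, s⁻¹ ∈ S) (hgen : Subgroup.closure (S : Set G) = ⊤)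
    (g : G) : ∃ l : List G, (∀ x ∈ l, x ∈ (S : Set G)) ∧ l.prod = g := by
  have hg : g ∈ Subgroup.closure (S : Set G) := by rw [hgen]; trivial
  induction hg using Subgroup.closure_induction with
  | mem x hx => exact ⟨[x], by simpa using hx, by simp⟩
  | one => exact ⟨[], by simp, by simp⟩
  | mul x y _ _ hx hy =>
      obtain ⟨l1, h1, p1⟩ := hx
      obtain ⟨l2, h2, p2⟩ := hy
      refine ⟨l1 ++ l2, ?_, by simp [p1, p2]⟩
      intro z hz
      rcases List.mem_append.1 hz with h | h
      exacts [h1 z h, h2 z h]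
  | inv x _ hx =>
      obtain ⟨l, h1, p1⟩ := hx
      refine ⟨(l.map fun x => x⁻¹).reverse, ?_, ?_⟩
      · intro z hz
        simp only [List.mem_reverse, List.mem_map] at hz
        obtain ⟨w, hw, rfl⟩ := hz
        exact hsymm w (h1 w hw)
      · rw [← List.prod_inv_reverse, p1]

lemma exists_min_list (hsymm : ∀ s ∈ S, s⁻¹ ∈ S) (hgen : Subgroup.closure (S : Set G) = ⊤)
    (g : G) : ∃ l : List G, (∀ x ∈ l, x ∈ (S : Set G)) ∧
      l.length = wordLength (S : Set G) g ∧ l.prod = g := by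
  obtain ⟨l, hl, hp⟩ := exists_list hsymm hgen g
  exact Nat.sInf_mem (⟨l.length, l, hl, rfl, hp⟩ :
    {n : ℕ | ∃ l : List G, (∀ x ∈ l, x ∈ (S : Set G)) ∧ l.length = n ∧ l.prod = g}.Nonempty)

lemma wl_mul (hsymm : ∀ s ∈ S, s⁻¹ ∈ S) (hgen : Subgroup.closure (S : Set G) = ⊤)
    (g h : G) : wordLength (S : Set G) (g * h) ≤
      wordLength (S : Set G) g + wordLength (S : Set G) h := by
  obtain ⟨l1, h1, len1, p1⟩ := exists_min_list hsymm hgen g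
  obtain ⟨l2, h2, len2, p2⟩ := exists_min_list hsymm hgen h
  have := wl_le (S := S) (l := l1 ++ l2) (g := g * h)
    (by intro z hz; rcases List.mem_append.1 hz with hh | hh; exacts [h1 z hh, h2 z hh])
    (by simp [p1, p2])
  simpa [len1, len2] using this

lemma wl_inv_le (hsymm : ∀ s ∈ S, s⁻¹ ∈ S) (hgen : Subgroup.closure (S : Set G) = ⊤)
    (g : G) : wordLength (S : Set G) g⁻¹ ≤ wordLength (S : Set G) g := by
  obtain ⟨l, hl, len, p⟩ := exists_min_list hsymm hgen g
  have := wl_le (S := S) (l := (l.map fun x => x⁻¹).reverse) (g := g⁻¹)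
    (by intro z hz
        simp only [List.mem_reverse, List.mem_map] at hz
        obtain ⟨w, hw, rfl⟩ := hz
        exact hsymm w (hl w hw))
    (by rw [← List.prod_inv_reverse, p])
  simpa [len] using this

lemma wl_inv (hsymm : ∀ s ∈ S, s⁻¹ ∈ S) (hgen : Subgroup.closure (S : Set G) = ⊤)
    (g : G) : wordLength (S : Set G) g⁻¹ = wordLength (S : Set G) g :=
  le_antisymm (wl_inv_le hsymm hgen g) (by
    simpa using wl_inv_le hsymm hgen g⁻¹)

lemma list_prod_mem_pow [DecidableEq G] (T : Finset G) :
    ∀ l : List G, (∀ x ∈ l, x ∈ T) → l.prod ∈ T ^ l.length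
  | [], _ => by simp [Finset.mem_one]
  | x :: xs, h => by
      rw [List.prod_cons, List.length_cons, pow_succ']
      exact Finset.mul_mem_mul (h x (by simp))
        (list_prod_mem_pow T xs (fun y hy => h y (by simp [hy])))

lemma mem_ball_pow [DecidableEq G] (hsymm : ∀ s ∈ S, s⁻¹ ∈ S)
    (hgen : Subgroup.closure (S : Set G) = ⊤) {g : G} {K : ℕ}
    (h : wordLength (S : Set G) g ≤ K) : g ∈ (insert (1 : G) S) ^ K := by
  obtain ⟨l, hl, len, p⟩ := exists_min_list hsymm hgen g
  have hlen : l.length ≤ K := len ▸ h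
  have hmem : ∀ x ∈ l ++ List.replicate (K - l.length) (1 : G), x ∈ insert (1 : G) S := by
    intro z hz
    rcases List.mem_append.1 hz with hh | hh
    · exact Finset.mem_insert_of_mem (hl z hh)
    · rw [List.eq_of_mem_replicate hh]; exact Finset.mem_insert_self _ _
  have hprod : (l ++ List.replicate (K - l.length) (1 : G)).prod = g := by
    simp [List.prod_append, p]
  have hlen2 : (l ++ List.replicate (K - l.length) (1 : G)).length = K := by
    simp [Nat.add_sub_cancel' hlen]
  have := list_prod_mem_pow (insert (1 : G) S) _ hmem
  rwa [hprod, hlen2] at this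

end WLaux


/-- **Proposition 2.1.2(i).** A word-hyperbolic group (Gromov four-point condition for
the word metric) has a linear conjugacy bound on elements of infinite order: there are
constants `A, B ≥ 0` such that any two conjugate elements `u, v` of infinite order admit
a conjugator `g` with `g⁻¹ v g = u` and `L_S(g) ≤ A (L_S(u) + L_S(v)) + B`. -/
theorem stmt_10 {G : Type*} [Group G]
    (S : Finset G) (hsymm : ∀ s ∈ S, s⁻¹ ∈ S)
    (hgen : Subgroup.closure (S : Set G) = ⊤)
    (δ : ℝ) (hδ : 0 ≤ δ)
    (hhyp : ∀ w x y z : G,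
      (wordLength (S : Set G) (w⁻¹ * x) : ℝ) + (wordLength (S : Set G) (y⁻¹ * z) : ℝ) ≤
        max ((wordLength (S : Set G) (w⁻¹ * y) : ℝ) + (wordLength (S : Set G) (x⁻¹ * z) : ℝ))
            ((wordLength (S : Set G) (w⁻¹ * z) : ℝ) + (wordLength (S : Set G) (x⁻¹ * y) : ℝ))
          + 2 * δ) :
    ∃ A B : ℝ, 0 ≤ A ∧ 0 ≤ B ∧
      ∀ u v : G, ¬ IsOfFinOrder u → ¬ IsOfFinOrder v → IsConj u v →
        ∃ g : G, g⁻¹ * v * g = u ∧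
          (wordLength (S : Set G) g : ℝ) ≤
            A * ((wordLength (S : Set G) u : ℝ) + (wordLength (S : Set G) v : ℝ)) + B := by
  classical
  set K : ℕ := ⌊6 * δ⌋₊ with hK
  set Ball : Finset G := (insert (1 : G) S) ^ K with hBall
  refine ⟨1, Ball.card, zero_le_one, by positivity, ?_⟩
  intro u v _ _ hconj
  -- a conjugator exists
  have hconj' : ∃ c : G, c⁻¹ * v * c = u := by
    obtain ⟨z, hz⟩ := isConj_iff.1 hconj
    refine ⟨z, ?_⟩
    rw [← hz]; group
  set T : Set ℕ := {k | ∃ c : G, c⁻¹ * v * c = u ∧ wordLength (S : Set G) c = k} with hT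
  have hTne : T.Nonempty := ⟨_, hconj'.choose, hconj'.choose_spec, rfl⟩
  obtain ⟨c, hc, hcn⟩ := Nat.sInf_mem hTne
  set n : ℕ := sInf T with hn
  have hmin : ∀ c' : G, c'⁻¹ * v * c' = u → n ≤ wordLength (S : Set G) c' :=
    fun c' h => Nat.sInf_le ⟨c', h, rfl⟩
  set a : ℕ := wordLength (S : Set G) v with ha
  set b : ℕ := wordLength (S : Set G) u with hb
  have key : n ≤ a + b + Ball.card := by
    by_contra hlt
    push_neg at hlt
    have hab : a + b < n := by omega
    have hbn : b ≤ n := by omega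
    -- minimal geodesic word for c
    obtain ⟨l, hl, hlen, hprod⟩ := WLaux.exists_min_list hsymm hgen c
    rw [hcn] at hlen
    set ci : ℕ → G := fun i => (l.take i).prod with hci
    have htake : ∀ i, i ≤ n → wordLength (S : Set G) (ci i) = i ∧
        wordLength (S : Set G) ((ci i)⁻¹ * c) = n - i := by
      intro i hi
      have hsplit : ci i * (l.drop i).prod = c := by
        simp only [hci]
        rw [← List.prod_append, List.take_append_drop, hprod]
      have h1 : wordLength (S : Set G) (ci i) ≤ i := by
        have := WLaux.wl_le (S := S) (l := l.take i) (g := ci i)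
          (fun x hx => hl x (List.mem_of_mem_take hx)) rfl
        rwa [List.length_take, hlen, min_eq_left hi] at this
      have h2 : wordLength (S : Set G) ((ci i)⁻¹ * c) ≤ n - i := by
        have heq : (ci i)⁻¹ * c = (l.drop i).prod := by
          rw [← hsplit]; group
        have := WLaux.wl_le (S := S) (l := l.drop i) (g := (l.drop i).prod)
          (fun x hx => hl x (List.mem_of_mem_drop hx)) rfl
        rw [heq]
        simpa [List.length_drop, hlen] using this
      have h3 : n ≤ wordLength (S : Set G) (ci i) + wordLength (S : Set G) ((ci i)⁻¹ * c) := by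
        have := WLaux.wl_mul hsymm hgen (ci i) ((ci i)⁻¹ * c)
        rw [mul_inv_cancel_left, hcn] at this
        exact this
      omega
    -- minimality: v * c and v⁻¹ * c are also conjugators
    have hQ : n ≤ wordLength (S : Set G) (v * c) := by
      refine hmin _ ?_
      have e : (v * c)⁻¹ * v * (v * c) = c⁻¹ * v * c := by group
      rw [e, hc]
    have hP : n ≤ wordLength (S : Set G) (v⁻¹ * c) := by
      refine hmin _ ?_
      have e : (v⁻¹ * c)⁻¹ * v * (v⁻¹ * c) = c⁻¹ * v * c := by group
      rw [e, hc]
    have hQr : (n : ℝ) ≤ (wordLength (S : Set G) (v * c) : ℝ) := by exact_mod_cast hQ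
    have hPr : (n : ℝ) ≤ (wordLength (S : Set G) (v⁻¹ * c) : ℝ) := by exact_mod_cast hP
    -- Step A : sum of diagonals bounded
    have StepA := hhyp 1 (v * c) v c
    rw [show (1 : G)⁻¹ * (v * c) = v * c by group,
        show (1 : G)⁻¹ * v = v by group,
        show (v * c)⁻¹ * c = u⁻¹ by rw [← hc]; group,
        show (1 : G)⁻¹ * c = c by group,
        show (v * c)⁻¹ * v = c⁻¹ by group,
        WLaux.wl_inv hsymm hgen u, WLaux.wl_inv hsymm hgen c, hcn] at StepA
    have habr : (a : ℝ) + (b : ℝ) ≤ (n : ℝ) + (n : ℝ) := by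
      have : a + b ≤ n + n := by omega
      exact_mod_cast this
    have hmaxA : max ((a : ℝ) + (b : ℝ)) ((n : ℝ) + (n : ℝ)) = (n : ℝ) + (n : ℝ) :=
      max_eq_right habr
    rw [hmaxA] at StepA
    have hQb : (wordLength (S : Set G) (v * c) : ℝ) ≤ (n : ℝ) + 2 * δ := by linarith
    have hPb : (wordLength (S : Set G) (v⁻¹ * c) : ℝ) ≤ (n : ℝ) + 2 * δ := by linarith
    -- middle conjugates lie in the ball
    have hmiddle : ∀ i ∈ Finset.Icc a (n - b), (ci i)⁻¹ * v * ci i ∈ Ball := by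
      intro i hi
      simp only [Finset.mem_Icc] at hi
      have hin : i ≤ n := by omega
      have hisum : i + b ≤ n := by omega
      obtain ⟨hEi, hEci⟩ := htake i hin
      have ci_r : (wordLength (S : Set G) (ci i) : ℝ) = (i : ℝ) := by exact_mod_cast hEi
      have cic_r : (wordLength (S : Set G) ((ci i)⁻¹ * c) : ℝ) = (n : ℝ) - (i : ℝ) := by
        rw [hEci, Nat.cast_sub hin]
      have hair : (a : ℝ) ≤ (i : ℝ) := by exact_mod_cast hi.1
      have hibr : (i : ℝ) + (b : ℝ) ≤ (n : ℝ) := by exact_mod_cast hisum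
      -- Step 2 : d(c_i, v) ≤ i + 4δ
      have Step2 := hhyp 1 c (ci i) v
      rw [show (1 : G)⁻¹ * c = c by group,
          show (1 : G)⁻¹ * ci i = ci i by group,
          show (1 : G)⁻¹ * v = v by group,
          show c⁻¹ * v = (v⁻¹ * c)⁻¹ by group,
          show c⁻¹ * ci i = ((ci i)⁻¹ * c)⁻¹ by group,
          WLaux.wl_inv hsymm hgen (v⁻¹ * c), WLaux.wl_inv hsymm hgen ((ci i)⁻¹ * c),
          hcn, ci_r, cic_r] at Step2
      have h2i : (wordLength (S : Set G) ((ci i)⁻¹ * v) : ℝ) ≤ (i : ℝ) + 4 * δ := by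
        have hmx : max ((i : ℝ) + (wordLength (S : Set G) (v⁻¹ * c) : ℝ))
            ((a : ℝ) + ((n : ℝ) - (i : ℝ))) ≤ (i : ℝ) + (n : ℝ) + 2 * δ :=
          max_le (by linarith) (by linarith)
        linarith
      -- Step 3 : d(c_i, v*c) ≤ (n - i) + 4δ
      have Step3 := hhyp c 1 (ci i) (v * c)
      rw [show c⁻¹ * 1 = c⁻¹ by group,
          show c⁻¹ * ci i = ((ci i)⁻¹ * c)⁻¹ by group,
          show (1 : G)⁻¹ * (v * c) = v * c by group,
          show c⁻¹ * (v * c) = u by rw [← hc]; group,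
          show (1 : G)⁻¹ * ci i = ci i by group,
          WLaux.wl_inv hsymm hgen c, WLaux.wl_inv hsymm hgen ((ci i)⁻¹ * c),
          hcn, ci_r, cic_r] at Step3
      have h3i : (wordLength (S : Set G) ((ci i)⁻¹ * (v * c)) : ℝ) ≤
          ((n : ℝ) - (i : ℝ)) + 4 * δ := by
        have hmx : max (((n : ℝ) - (i : ℝ)) + (wordLength (S : Set G) (v * c) : ℝ))
            ((b : ℝ) + (i : ℝ)) ≤ ((n : ℝ) - (i : ℝ)) + (n : ℝ) + 2 * δ :=
          max_le (by linarith) (by linarith)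
        linarith
      -- Step 1 : d(c_i, v c_i) ≤ 6δ
      have Step1 := hhyp v (v * c) (v * ci i) (ci i)
      rw [show v⁻¹ * (v * c) = c by group,
          show (v * ci i)⁻¹ * ci i = ((ci i)⁻¹ * v * ci i)⁻¹ by group,
          show v⁻¹ * (v * ci i) = ci i by group,
          show (v * c)⁻¹ * ci i = ((ci i)⁻¹ * (v * c))⁻¹ by group,
          show v⁻¹ * ci i = ((ci i)⁻¹ * v)⁻¹ by group,
          show (v * c)⁻¹ * (v * ci i) = ((ci i)⁻¹ * c)⁻¹ by group,
          WLaux.wl_inv hsymm hgen ((ci i)⁻¹ * v * ci i),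
          WLaux.wl_inv hsymm hgen ((ci i)⁻¹ * (v * c)),
          WLaux.wl_inv hsymm hgen ((ci i)⁻¹ * v),
          WLaux.wl_inv hsymm hgen ((ci i)⁻¹ * c),
          hcn, ci_r, cic_r] at Step1
      have h1i : (wordLength (S : Set G) ((ci i)⁻¹ * v * ci i) : ℝ) ≤ 6 * δ := by
        have hmx : max ((i : ℝ) + (wordLength (S : Set G) ((ci i)⁻¹ * (v * c)) : ℝ))
            ((wordLength (S : Set G) ((ci i)⁻¹ * v) : ℝ) + ((n : ℝ) - (i : ℝ))) ≤
            (n : ℝ) + 4 * δ :=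
          max_le (by linarith) (by linarith)
        linarith
      have hK' : wordLength (S : Set G) ((ci i)⁻¹ * v * ci i) ≤ K :=
        Nat.le_floor h1i
      exact WLaux.mem_ball_pow hsymm hgen hK'
    -- pigeonhole
    have hcard : Ball.card < (Finset.Icc a (n - b)).card := by
      rw [Nat.card_Icc]
      omega
    obtain ⟨i, hi, j, hj, hne, hfe⟩ :=
      Finset.exists_ne_map_eq_of_card_lt_of_maps_to hcard hmiddle
    have keyij : ∀ i j : ℕ, i ∈ Finset.Icc a (n - b) → j ∈ Finset.Icc a (n - b) → i < j →
        (ci i)⁻¹ * v * ci i = (ci j)⁻¹ * v * ci j → False := by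
      intro i j hi hj hij heq
      simp only [Finset.mem_Icc] at hi hj
      have hin : i ≤ n := by omega
      have hjn : j ≤ n := by omega
      have hc' : (ci i * ((ci j)⁻¹ * c))⁻¹ * v * (ci i * ((ci j)⁻¹ * c)) = u := by
        have e1 : (ci i * ((ci j)⁻¹ * c))⁻¹ * v * (ci i * ((ci j)⁻¹ * c)) =
            (c⁻¹ * ci j) * ((ci i)⁻¹ * v * ci i) * ((ci j)⁻¹ * c) := by group
        rw [e1, heq]
        have e2 : (c⁻¹ * ci j) * ((ci j)⁻¹ * v * ci j) * ((ci j)⁻¹ * c) = c⁻¹ * v * c := by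
          group
        rw [e2, hc]
      have hlen' : wordLength (S : Set G) (ci i * ((ci j)⁻¹ * c)) ≤ i + (n - j) := by
        have := WLaux.wl_mul hsymm hgen (ci i) ((ci j)⁻¹ * c)
        rw [(htake i hin).1, (htake j hjn).2] at this
        exact this
      have := hmin _ hc'
      omega
    rcases lt_or_gt_of_ne hne with h | h
    · exact keyij i j hi hj h hfe
    · exact keyij j i hj hi h hfe.symm
  refine ⟨c, hc, ?_⟩
  have hk : (n : ℝ) ≤ (a : ℝ) + (b : ℝ) + (Ball.card : ℝ) := by exact_mod_cast key
  rw [hcn, one_mul]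
  push_cast at hk ⊢
  linarith
end

section
/- For all natural numbers m and n there exists a polynomial Q with nonnegative real coefficients, depending only on m and n, with the following property: for every m×n integer matrix A and every b ∈ ℤ^m, if the linear system A z = b has a solution z ∈ ℤⁿ, then it has a solution z ∈ ℤⁿ satisfying max_i |z_i| ≤ Q(H), where H is the maximum of the absolute values of the entries of A and of b. (Polynomial bound on integral solutions of integer linear systems, used in the proof of Proposition 2.1.1(i).) -/
/-!
If the columns of `A` are linearly independent, Cramer's rule for the Gram system
`(Aᵀ A) z = Aᵀ b` gives `det (Aᵀ A) • z = adj (Aᵀ A) Aᵀ b`, where `det (Aᵀ A)` is a nonzero integer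
and the right-hand side is bounded polynomially in `H`. Otherwise, take a maximal independent set
`s` of columns and a column `j ∉ s`; the same rule applied to the columns in `s` yields an integral
kernel vector `w` whose entry `w j = det (A_sᵀ A_s)` is nonzero and polynomially bounded.
Subtracting a multiple of `w` from a solution moves `z j` into `[0, |w j|)`; once that coordinate is
fixed, the remaining `n - 1` unknowns solve a system whose right-hand side is still polynomially
bounded, and induction on `n` finishes.
-/

open Matrix Nat

section Gram

variable {R ι κ : Type*} [CommRing R] [Fintype ι] [Fintype κ] [DecidableEq κ]

theorem Matrix.det_transpose_mul_self_smul (A : Matrix ι κ R) (v : κ → R) :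
    (Aᵀ * A).det • v = (Aᵀ * A).adjugate *ᵥ (Aᵀ *ᵥ (A *ᵥ v)) := by
  rw [mulVec_mulVec, mulVec_mulVec, Matrix.mul_assoc, adjugate_mul, smul_mulVec, one_mulVec]

theorem Matrix.mulVec_adjugate_transpose_mul_self [IsDomain R] (A : Matrix ι κ R) {v : κ → R}
    {a : R} {c : ι → R} (ha : a ≠ 0) (hv : A *ᵥ v = a • c) :
    A *ᵥ ((Aᵀ * A).adjugate *ᵥ (Aᵀ *ᵥ c)) = (Aᵀ * A).det • c := by
  refine smul_right_injective _ ha ?_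
  beta_reduce
  rw [← mulVec_smul, ← mulVec_smul, ← mulVec_smul, ← hv, ← det_transpose_mul_self_smul,
    mulVec_smul, hv, smul_comm]

theorem Matrix.det_transpose_mul_self_ne_zero [LinearOrder R] [IsStrictOrderedRing R]
    {A : Matrix ι κ R} (hA : Function.Injective A.mulVec) : (Aᵀ * A).det ≠ 0 := by
  intro h
  obtain ⟨v, hv, hGv⟩ := exists_mulVec_eq_zero_iff.mpr h
  refine hv (hA ?_)
  have := congr_arg (dotProduct v) hGv
  rwa [← mulVec_mulVec, dotProduct_mulVec, dotProduct_zero, vecMul_transpose,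
    dotProduct_self_eq_zero, ← mulVec_zero A] at this

end Gram

theorem Matrix.mulVec_extend_subtype {R ι κ : Type*} [CommRing R] [Fintype κ] {s : Set κ}
    [DecidablePred (· ∈ s)] (A : Matrix ι κ R) (p : s → R) :
    A *ᵥ Function.extend Subtype.val p 0 = A.submatrix id Subtype.val *ᵥ p := by
  ext i
  refine Finset.sum_congr_set s _ _ (fun j hj => ?_) (fun j hj => ?_)
  · simp [Function.extend_val_apply hj]
  · simp [Function.extend_val_apply' hj]

theorem Matrix.mulVec_insertNth {R ι : Type*} [CommSemiring R] {n : ℕ}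
    (A : Matrix ι (Fin (n + 1)) R) (j : Fin (n + 1)) (x : R) (y : Fin n → R) :
    A *ᵥ j.insertNth x y = x • A.col j + A.submatrix id j.succAbove *ᵥ y := by
  ext i
  simp [mulVec, dotProduct, Fin.sum_univ_succAbove _ j, mul_comm]

section IntegerBounds

variable {ι κ : Type*} [Fintype ι] [Fintype κ]

theorem abs_dotProduct_le (v w : ι → ℤ) {x y : ℤ} (hv : ∀ i, |v i| ≤ x) (hw : ∀ i, |w i| ≤ y) :
    |v ⬝ᵥ w| ≤ Fintype.card ι * (x * y) :=
  calc |v ⬝ᵥ w| ≤ ∑ i, |v i * w i| := Finset.abs_sum_le_sum_abs _ _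
    _ ≤ ∑ _i : ι, x * y := by
      gcongr with i
      rw [abs_mul]
      exact mul_le_mul (hv i) (hw i) (abs_nonneg _) ((abs_nonneg _).trans (hv i))
    _ = Fintype.card ι * (x * y) := by simp

variable [DecidableEq κ]

theorem abs_det_le (M : Matrix κ κ ℤ) {x : ℤ} (hM : ∀ i j, |M i j| ≤ x) :
    |M.det| ≤ (Fintype.card κ)! * x ^ Fintype.card κ := by
  simpa [nsmul_eq_mul] using det_le (abv := AbsoluteValue.abs) hM

theorem abs_adjugate_apply_le (M : Matrix κ κ ℤ) {x : ℤ} (hx : 1 ≤ x) (hM : ∀ i j, |M i j| ≤ x)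
    (i j : κ) : |M.adjugate i j| ≤ (Fintype.card κ)! * x ^ Fintype.card κ := by
  rw [adjugate_apply]
  refine abs_det_le _ fun k l => ?_
  rcases eq_or_ne k j with rfl | hk
  · rw [updateRow_self, Pi.single_apply]
    split_ifs <;> simp [hx, zero_le_one.trans hx]
  · rw [updateRow_ne hk]
    exact hM k l

def gramBound (m k H : ℕ) : ℕ := (k + 1)! * ((m + 1) * (H + 1) ^ 2) ^ (k + 1)

omit [DecidableEq κ] in
theorem gramBound_mono {m k k' : ℕ} (H : ℕ) (hk : k ≤ k') :
    gramBound m k H ≤ gramBound m k' H :=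
  Nat.mul_le_mul (factorial_le (by omega)) (Nat.pow_le_pow_right (by positivity) (by omega))

omit [DecidableEq κ] in
theorem gramBound_eq (m k H : ℕ) :
    gramBound m k H = (k + 1)! * (m + 1) ^ (k + 1) * (H + 1) ^ (2 * (k + 1)) := by
  rw [gramBound, mul_pow, ← pow_mul, mul_assoc]

variable {A : Matrix ι κ ℤ} {H : ℕ}

omit [Fintype κ] [DecidableEq κ] in
theorem abs_transpose_mul_self_apply_le (hA : ∀ i j, |A i j| ≤ H) (j l : κ) :
    |(Aᵀ * A) j l| ≤ ((Fintype.card ι + 1) * (H + 1) ^ 2 : ℕ) := by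
  refine (abs_dotProduct_le _ _ (fun i => hA i j) (fun i => hA i l)).trans ?_
  push_cast
  nlinarith [Int.natCast_nonneg H, Int.natCast_nonneg (Fintype.card ι)]

theorem abs_det_transpose_mul_self_le (hA : ∀ i j, |A i j| ≤ H) :
    |(Aᵀ * A).det| ≤ gramBound (Fintype.card ι) (Fintype.card κ) H := by
  have hE : 1 ≤ (Fintype.card ι + 1) * (H + 1) ^ 2 := Nat.one_le_iff_ne_zero.mpr (by positivity)
  refine (abs_det_le _ (abs_transpose_mul_self_apply_le hA)).trans ?_
  exact_mod_cast Nat.mul_le_mul (factorial_le (le_succ _)) (Nat.pow_le_pow_right hE (le_succ _))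

theorem abs_adjugate_transpose_mul_self_mulVec_le (hA : ∀ i j, |A i j| ≤ H) {c : ι → ℤ}
    (hc : ∀ i, |c i| ≤ H) (j : κ) :
    |((Aᵀ * A).adjugate *ᵥ (Aᵀ *ᵥ c)) j| ≤ gramBound (Fintype.card ι) (Fintype.card κ) H := by
  set E : ℕ := (Fintype.card ι + 1) * (H + 1) ^ 2
  have hE : 1 ≤ E := Nat.one_le_iff_ne_zero.mpr (by positivity)
  have hAc (l : κ) : |(Aᵀ *ᵥ c) l| ≤ E :=
    (abs_dotProduct_le _ _ (fun i => hA i l) hc).trans (by push_cast [E]; nlinarith)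
  have hadj := abs_adjugate_apply_le _ (by exact_mod_cast hE) (abs_transpose_mul_self_apply_le hA)
  refine (abs_dotProduct_le _ _ (hadj j) hAc).trans ?_
  set k := Fintype.card κ
  have key : k * (k ! * E ^ k * E) ≤ (k + 1)! * E ^ (k + 1) := by
    rw [factorial_succ, pow_succ, mul_assoc (k + 1), mul_assoc (k !)]
    exact Nat.mul_le_mul_right _ (le_succ k)
  exact_mod_cast key

theorem abs_le_gramBound_of_injective (hA : Function.Injective A.mulVec) {b : ι → ℤ}
    {z : κ → ℤ} (hz : A *ᵥ z = b) (hAH : ∀ i j, |A i j| ≤ H) (hbH : ∀ i, |b i| ≤ H) (j : κ) :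
    |z j| ≤ gramBound (Fintype.card ι) (Fintype.card κ) H := by
  have hd := det_transpose_mul_self_ne_zero hA
  calc |z j| ≤ |(Aᵀ * A).det| * |z j| := le_mul_of_one_le_left (abs_nonneg _) (Int.one_le_abs hd)
    _ = |((Aᵀ * A).det • z) j| := by rw [Pi.smul_apply, smul_eq_mul, abs_mul]
    _ = |((Aᵀ * A).adjugate *ᵥ (Aᵀ *ᵥ b)) j| := by rw [det_transpose_mul_self_smul, hz]
    _ ≤ gramBound (Fintype.card ι) (Fintype.card κ) H :=
      abs_adjugate_transpose_mul_self_mulVec_le hAH hbH j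

theorem exists_mulVec_eq_zero_abs_le (hA : ¬ Function.Injective A.mulVec)
    (hAH : ∀ i j, |A i j| ≤ H) :
    ∃ w : κ → ℤ, A *ᵥ w = 0 ∧
      ∃ j, w j ≠ 0 ∧ |w j| ≤ gramBound (Fintype.card ι) (Fintype.card κ) H := by
  classical
  obtain ⟨s, hs, hmax⟩ := exists_maximal_linearIndepOn ℤ A.col
  obtain ⟨j, hj⟩ : ∃ j, j ∉ s := by
    by_contra! h
    rw [Set.eq_univ_of_forall h, linearIndepOn_univ_iff] at hs
    exact hA (mulVec_injective_iff.mpr hs)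
  obtain ⟨a, ha, hspan⟩ := hmax j hj
  obtain ⟨c, hc⟩ := (Fintype.mem_span_image_iff_exists_fun ℤ).mp hspan
  set M := A.submatrix id ((↑) : s → κ)
  have hMc : M *ᵥ c = a • A.col j := by
    rw [← hc]
    ext i
    simp [M, mulVec, dotProduct, Finset.sum_apply, mul_comm]
  set d := (Mᵀ * M).det
  have hd : d ≠ 0 := det_transpose_mul_self_ne_zero (mulVec_injective_iff.mpr hs)
  set p := (Mᵀ * M).adjugate *ᵥ (Mᵀ *ᵥ A.col j)
  have hMp : M *ᵥ p = d • A.col j := mulVec_adjugate_transpose_mul_self M ha hMc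
  set w : κ → ℤ := Pi.single j d - Function.extend Subtype.val p 0
  have hwj : w j = d := by simp [w, Function.extend_val_apply' hj]
  refine ⟨w, ?_, j, hwj ▸ hd, hwj ▸ ?_⟩
  · rw [mulVec_sub, mulVec_extend_subtype, hMp, mulVec_single, op_smul_eq_smul, sub_self]
  · refine (abs_det_transpose_mul_self_le (A := M) fun i l => hAH i l).trans ?_
    exact_mod_cast gramBound_mono H (Fintype.card_subtype_le _)

end IntegerBounds

theorem exists_mulVec_eq_emod {ι κ : Type*} [Fintype κ] {A : Matrix ι κ ℤ} {b : ι → ℤ}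
    {z w : κ → ℤ} {j : κ} (hz : A *ᵥ z = b) (hw : A *ᵥ w = 0) (hwj : w j ≠ 0) :
    ∃ z' : κ → ℤ, A *ᵥ z' = b ∧ 0 ≤ z' j ∧ z' j < |w j| := by
  refine ⟨z - (z j / w j) • w, by rw [mulVec_sub, mulVec_smul, hw, hz, smul_zero, sub_zero], ?_⟩
  have : (z - (z j / w j) • w) j = z j % w j := by simp [Int.emod_def, mul_comm]
  rw [this]
  exact ⟨Int.emod_nonneg _ hwj, Int.emod_lt_abs _ hwj⟩

theorem add_one_mul_add_one_pow_le {C D c e H K : ℕ} (hK : K ≤ c * (H + 1) ^ e) :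
    C * ((K + 1) * (H + 1) + 1) ^ D ≤ C * (c + 2) ^ D * (H + 1) ^ ((e + 1) * D) := by
  have hpow : 1 ≤ (H + 1) ^ e := Nat.one_le_pow _ _ (succ_pos H)
  have : (K + 1) * (H + 1) + 1 ≤ (c + 2) * (H + 1) ^ (e + 1) :=
    calc (K + 1) * (H + 1) + 1 ≤ (K + 2) * (H + 1) := by nlinarith
      _ ≤ (c * (H + 1) ^ e + 2 * (H + 1) ^ e) * (H + 1) := by gcongr; omega
      _ = (c + 2) * (H + 1) ^ (e + 1) := by ring
  calc C * ((K + 1) * (H + 1) + 1) ^ D ≤ C * ((c + 2) * (H + 1) ^ (e + 1)) ^ D := by gcongr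
    _ = C * (c + 2) ^ D * (H + 1) ^ ((e + 1) * D) := by rw [mul_pow, ← pow_mul]; ring

section SolutionBound

variable {ι : Type*}

variable (ι) in
def HasSolutionBound (n C D : ℕ) : Prop :=
  ∀ (A : Matrix ι (Fin n) ℤ) (b : ι → ℤ) (H : ℕ), (∀ i j, |A i j| ≤ H) → (∀ i, |b i| ≤ H) →
    (∃ z, A *ᵥ z = b) → ∃ z, A *ᵥ z = b ∧ ∀ j, |z j| ≤ (C * (H + 1) ^ D : ℕ)

theorem HasSolutionBound.exists_insertNth {n C D : ℕ} (h : HasSolutionBound ι n C D)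
    {A : Matrix ι (Fin (n + 1)) ℤ} {b : ι → ℤ} {z : Fin (n + 1) → ℤ} (hz : A *ᵥ z = b)
    (j : Fin (n + 1)) {H K : ℕ} (hA : ∀ i j, |A i j| ≤ H) (hb : ∀ i, |b i| ≤ H)
    (hzj : |z j| ≤ K) :
    ∃ y : Fin n → ℤ, A *ᵥ j.insertNth (z j) y = b ∧
      ∀ l, |y l| ≤ (C * ((K + 1) * (H + 1) + 1) ^ D : ℕ) := by
  set A' := A.submatrix id j.succAbove
  set b' := b - z j • A.col j
  have hA' (i : ι) (l : Fin n) : |A' i l| ≤ ((K + 1) * (H + 1) : ℕ) :=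
    (hA i _).trans (Nat.cast_le.mpr ((le_succ H).trans (Nat.le_mul_of_pos_left _ (succ_pos K))))
  have hb' (i : ι) : |b' i| ≤ ((K + 1) * (H + 1) : ℕ) :=
    calc |b' i| = |b i - z j * A i j| := rfl
      _ ≤ |b i| + |z j| * |A i j| := by rw [← abs_mul]; exact abs_sub _ _
      _ ≤ H + K * H := by gcongr; exacts [hb i, hA i j]
      _ ≤ ((K + 1) * (H + 1) : ℕ) := by push_cast; nlinarith
  have hsolv : A' *ᵥ j.removeNth z = b' := by
    have h := mulVec_insertNth A j (z j) (j.removeNth z)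
    rw [Fin.insertNth_self_removeNth, hz] at h
    simp only [A', b', h, add_sub_cancel_left]
  obtain ⟨y, hy, hyb⟩ := h A' b' _ hA' hb' ⟨_, hsolv⟩
  exact ⟨y, by rw [mulVec_insertNth, hy, add_sub_cancel], hyb⟩

variable [Fintype ι]

theorem HasSolutionBound.succ {n C D : ℕ} (h : HasSolutionBound ι n C D) :
    ∃ C' D', HasSolutionBound ι (n + 1) C' D' := by
  set c := (n + 2)! * (Fintype.card ι + 1) ^ (n + 2)
  set e := 2 * (n + 2)
  refine ⟨c + C * (c + 2) ^ D, (e + 1) * (D + 1), fun A b H hA hb ⟨z, hz⟩ => ?_⟩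
  have hmono {c₁ e₁ : ℕ} (hc : c₁ ≤ c + C * (c + 2) ^ D) (he : e₁ ≤ (e + 1) * (D + 1)) :
      c₁ * (H + 1) ^ e₁ ≤ (c + C * (c + 2) ^ D) * (H + 1) ^ ((e + 1) * (D + 1)) :=
    Nat.mul_le_mul hc (Nat.pow_le_pow_right (succ_pos H) he)
  set K := gramBound (Fintype.card ι) (n + 1) H
  have hK : K ≤ c * (H + 1) ^ e := (gramBound_eq _ _ _).le
  have hKle : (K : ℤ) ≤ ((c + C * (c + 2) ^ D) * (H + 1) ^ ((e + 1) * (D + 1)) : ℕ) :=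
    Nat.cast_le.mpr (hK.trans (hmono (Nat.le_add_right _ _) (by nlinarith)))
  by_cases hinj : Function.Injective A.mulVec
  · refine ⟨z, hz, fun j => (abs_le_gramBound_of_injective hinj hz hA hb j).trans ?_⟩
    rwa [Fintype.card_fin]
  obtain ⟨w, hw, j, hwj, hwK⟩ := exists_mulVec_eq_zero_abs_le hinj hA
  rw [Fintype.card_fin] at hwK
  obtain ⟨z', hz', h0, hlt⟩ := exists_mulVec_eq_emod hz hw hwj
  have hz'j : |z' j| ≤ K := by rw [abs_of_nonneg h0]; exact (hlt.trans_le hwK).le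
  obtain ⟨y, hy, hyb⟩ := h.exists_insertNth hz' j hA hb hz'j
  refine ⟨j.insertNth (z' j) y, hy, fun l => ?_⟩
  rcases eq_or_ne l j with rfl | hne
  · rw [Fin.insertNth_apply_same]
    exact hz'j.trans hKle
  · obtain ⟨l, rfl⟩ := Fin.exists_succAbove_eq hne
    rw [Fin.insertNth_apply_succAbove]
    refine (hyb l).trans (Nat.cast_le.mpr ((add_one_mul_add_one_pow_le hK).trans ?_))
    exact hmono (Nat.le_add_left _ _) (by nlinarith)

variable (ι) in
theorem exists_hasSolutionBound (n : ℕ) : ∃ C D, HasSolutionBound ι n C D := by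
  induction n with
  | zero => exact ⟨0, 0, fun A b H _ _ ⟨z, hz⟩ => ⟨z, hz, fun j => j.elim0⟩⟩
  | succ n ih =>
    obtain ⟨C, D, h⟩ := ih
    exact h.succ

end SolutionBound

/-- **Polynomial bound on integral solutions of integer linear systems (used in
Proposition 2.1.1(i)).** For all `m, n` there is a polynomial `Q` with nonnegative
coefficients such that any solvable system `A z = b` (with `A` an `m × n` integer
matrix, `b ∈ ℤ^m`) has an integer solution with all entries bounded by `Q(H)`, where
`H` is the maximum of the absolute values of the entries of `A` and `b`. -/
theorem stmt_14 (m n : ℕ) :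
    ∃ Q : Polynomial ℝ, (∀ i : ℕ, 0 ≤ Q.coeff i) ∧
      ∀ (A : Matrix (Fin m) (Fin n) ℤ) (b : Fin m → ℤ),
        (∃ z : Fin n → ℤ, A.mulVec z = b) →
        ∃ z : Fin n → ℤ, A.mulVec z = b ∧
          ∀ i : Fin n, (|z i| : ℝ) ≤
            Q.eval ((max (Finset.univ.sup fun p : Fin m × Fin n => (A p.1 p.2).natAbs)
                         (Finset.univ.sup fun i : Fin m => (b i).natAbs) : ℕ) : ℝ) := by
  obtain ⟨C, D, hCD⟩ := exists_hasSolutionBound (Fin m) n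
  refine ⟨Polynomial.C (C : ℝ) * (Polynomial.X + 1) ^ D, fun i => ?_, fun A b hsol => ?_⟩
  · rw [Polynomial.coeff_C_mul, Polynomial.coeff_X_add_one_pow]
    positivity
  set H := max (Finset.univ.sup fun p : Fin m × Fin n => (A p.1 p.2).natAbs)
    (Finset.univ.sup fun i : Fin m => (b i).natAbs)
  have hA (i : Fin m) (j : Fin n) : |A i j| ≤ H := by
    rw [Int.abs_eq_natAbs, Nat.cast_le]
    exact (Finset.le_sup (f := fun p : Fin m × Fin n => (A p.1 p.2).natAbs)
      (Finset.mem_univ (i, j))).trans (le_max_left _ _)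
  have hb (i : Fin m) : |b i| ≤ H := by
    rw [Int.abs_eq_natAbs, Nat.cast_le]
    exact (Finset.le_sup (f := fun i : Fin m => (b i).natAbs) (Finset.mem_univ i)).trans
      (le_max_right _ _)
  obtain ⟨z, hz, hzH⟩ := hCD A b H hA hb hsol
  refine ⟨z, hz, fun i => ?_⟩
  simpa using (Int.cast_le (R := ℝ)).mpr (hzH i)
end
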